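/- Deleting a redundant character from a deposition sequence preserves all greedy embeddings: if position i of D is not used by the greedy embedding of any s ∈ S, then for each s ∈ S, the greedy embedding of s into D' (D with position i deleted) uses exactly the same characters-with-multiplicity, i.e., the embedding sequence of s into D' is obtained from that into D by deleting coordinate i (which was a gap '−' for every s). -/

import Mathlib

/-! A gap of the greedy embedding at position `i` means the greedy scan skipped `D[i]`, either
because `s` was already exhausted or because `D[i]` differs from the letter sought next. In both
cases the scan of `D.eraseIdx i` makes the same decisions everywhere else, so the embedding just
loses coordinate `i`; as that coordinate is `none` in every embedding, no Hamming distance changes. -/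

/-- The greedy leftmost embedding of a string `s` into a supersequence `D`:
a length-`|D|` list over `Option α` with `some c` at used positions and `none`
at gaps. -/
def emb {α : Type*} [DecidableEq α] : List α → List α → List (Option α)
  | [], _ => []
  | _ :: D, [] => none :: emb D []
  | d :: D, c :: s => if d = c then some c :: emb D s else none :: emb D (c :: s)

/-- Hamming distance between two lists (of equal length): the number of
positions at which they differ. -/
def hammingL {β : Type*} [DecidableEq β] : List β → List β → ℕ
  | x :: xs, y :: ys => (if x = y then 0 else 1) + hammingL xs ys
  | _, _ => 0

section
variable {α : Type*} [DecidableEq α]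

theorem emb_eraseIdx_of_getElem?_eq_some_none {D s : List α} {i : ℕ}
    (h : (emb D s)[i]? = some none) : emb (D.eraseIdx i) s = (emb D s).eraseIdx i := by
  induction D generalizing s i with
  | nil => simp [emb] at h
  | cons d D ih =>
    match s, i with
    | [], 0 => simp [emb]
    | [], i + 1 => simp_all [emb]
    | c :: s, 0 => by_cases hdc : d = c <;> simp_all [emb]
    | c :: s, i + 1 => by_cases hdc : d = c <;> simp_all [emb]

theorem sublist_eraseIdx_of_emb_getElem?_eq_some_none {D s : List α} {i : ℕ}
    (hs : s.Sublist D) (h : (emb D s)[i]? = some none) : s.Sublist (D.eraseIdx i) := by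
  induction D generalizing s i with
  | nil => simp [emb] at h
  | cons d D ih =>
    match s, i with
    | [], _ => exact List.nil_sublist _
    | c :: s, 0 =>
      by_cases hdc : d = c
      · simp [emb, hdc] at h
      · exact hs.of_cons_of_ne (Ne.symm hdc)
    | c :: s, i + 1 =>
      by_cases hdc : d = c
      · subst hdc
        simp only [emb, if_true, List.getElem?_cons_succ] at h
        exact (ih (List.cons_sublist_cons.mp hs) h).cons_cons d
      · simp only [emb, if_neg hdc, List.getElem?_cons_succ] at h
        exact (ih (hs.of_cons_of_ne (Ne.symm hdc)) h).cons d
end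

theorem hammingL_eraseIdx_of_getElem?_eq {β : Type*} [DecidableEq β] {xs ys : List β} {i : ℕ}
    (h : xs[i]? = ys[i]?) : hammingL (xs.eraseIdx i) (ys.eraseIdx i) = hammingL xs ys := by
  induction xs generalizing ys i with
  | nil => cases ys <;> cases i <;> simp_all [hammingL]
  | cons x xs ih =>
    match ys, i with
    | [], _ => simp [hammingL]
    | y :: ys, 0 => simp_all [hammingL]
    | y :: ys, i + 1 => simp_all [hammingL]

theorem stmt_13_general {α : Type*} [DecidableEq α] (D : List α) (S : Finset (List α))
    (hsub : ∀ s ∈ S, s.Sublist D) (i : ℕ)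
    (hred : ∀ s ∈ S, (emb D s)[i]? = some none) :
    (∀ s ∈ S, s.Sublist (D.eraseIdx i) ∧ emb (D.eraseIdx i) s = (emb D s).eraseIdx i) ∧
    (∀ s ∈ S, ∀ t ∈ S,
      hammingL (emb (D.eraseIdx i) s) (emb (D.eraseIdx i) t) =
        hammingL (emb D s) (emb D t)) := by
  refine ⟨fun s hs => ⟨sublist_eraseIdx_of_emb_getElem?_eq_some_none (hsub s hs) (hred s hs),
    emb_eraseIdx_of_getElem?_eq_some_none (hred s hs)⟩, fun s hs t ht => ?_⟩
  rw [emb_eraseIdx_of_getElem?_eq_some_none (hred s hs),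
    emb_eraseIdx_of_getElem?_eq_some_none (hred t ht)]
  exact hammingL_eraseIdx_of_getElem?_eq ((hred s hs).trans (hred t ht).symm)

/-- Deleting a redundant position `i` of `D` (a gap in the embedding of every
`s ∈ S`) preserves all greedy embeddings: each `s ∈ S` is still a subsequence
of `D' = D.eraseIdx i`, its embedding into `D'` is the old embedding with
coordinate `i` removed, and all pairwise Hamming distances of embeddings are
preserved. -/
theorem stmt_13 {α : Type*} [DecidableEq α] (D : List α) (S : Finset (List α))
    (hsub : ∀ s ∈ S, s.Sublist D) (i : ℕ) (hi : i < D.length)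
    (hred : ∀ s ∈ S, (emb D s)[i]? = some none) :
    (∀ s ∈ S, s.Sublist (D.eraseIdx i) ∧ emb (D.eraseIdx i) s = (emb D s).eraseIdx i) ∧
    (∀ s ∈ S, ∀ t ∈ S,
      hammingL (emb (D.eraseIdx i) s) (emb (D.eraseIdx i) t) =
        hammingL (emb D s) (emb D t)) :=
  stmt_13_general D S hsub i hred
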